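/- arXiv:1110.1118 — 2 statements merged into one kernel-verified Lean document; each statement's English description precedes it below -/
import Mathlib

section
/- Let Δ(z) be a homogeneous polynomial of degree s on ℂ^N with partials Δ_1, ..., Δ_N, and let t ≥ 0. For every homogeneous polynomial P(z) of degree (t+1)s there exists a decomposition P(z) = L(z) + C(z) with L(z) = (Δ_1(z)A_1(z) + ... + Δ_N(z)A_N(z))·Δ(z)^t for some linear forms A_1, ..., A_N, and (Δ_k Δ^t)*(C) = 0 for all k = 1, ..., N; moreover L and C are uniquely determined. -/
open MvPolynomial

/-- The iterated partial derivative `∂^d = ∏_i (∂/∂z_i)^{d i}` as a linear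
endomorphism of `ℂ[z_1,...,z_N]`. -/
noncomputable def pderivPow {N : ℕ} (d : Fin N →₀ ℕ) :
    Module.End ℂ (MvPolynomial (Fin N) ℂ) :=
  ((Finsupp.toMultiset d).toList.map fun i => ((pderiv (R := ℂ) i).toLinearMap : Module.End ℂ (MvPolynomial (Fin N) ℂ))).prod

/-- The Fisher differential operator `V*` of `V(z) = Σ_I b_I z^I`, applied to `P`:
`V* P = Σ_I b̄_I ∂^I P`. -/
noncomputable def fisher {N : ℕ} (V P : MvPolynomial (Fin N) ℂ) :
    MvPolynomial (Fin N) ℂ :=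
  ∑ d ∈ V.support, (starRingEnd ℂ) (V.coeff d) • pderivPow d P

/-!
The Fisher pairing `⟨P, Q⟩ = constantCoeff (P* Q) = ∑_d d! · conj (P_d) · Q_d` is a Hermitian
inner product on `ℂ[z]` for which multiplication by `V` is adjoint to `V*`. For `B_k = Δ_k Δ^t`
let `K` be the finite-dimensional space of all `∑_k A_k B_k` with linear forms `A_k`. Then
`⟨z_i B_k, C⟩ = ⟨z_i, B_k* C⟩` is the coefficient of `z_i` in `B_k* C`, which for `C` of degree
`(t+1)s` is a linear form; so `C ⊥ K` iff `B_k* C = 0` for all `k`, and the decomposition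
`P = L + C` is exactly the orthogonal decomposition of `P` along `K`.
-/

open scoped Nat

namespace MvPolynomial

variable {R σ : Type*} [CommRing R]

theorem pderiv_comm (i j : σ) (f : MvPolynomial σ R) :
    pderiv i (pderiv j f) = pderiv j (pderiv i f) := by
  have h : ⁅pderiv i, pderiv j⁆ = (0 : Derivation R (MvPolynomial σ R) (MvPolynomial σ R)) :=
    derivation_ext fun k => by
      classical rw [Derivation.commutator_apply]; simp [pderiv_X, Pi.single_apply, apply_ite]
  rw [← sub_eq_zero, ← Derivation.commutator_apply, h, Derivation.zero_apply]

theorem IsHomogeneous.eq_sum_coeff_smul_X [Fintype σ] {A : MvPolynomial σ R}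
    (hA : A.IsHomogeneous 1) : A = ∑ i, coeff (Finsupp.single i 1) A • X i := by
  have hconst (i : σ) : pderiv i A = C (coeff (Finsupp.single i 1) A) := by
    have h0 : (pderiv i A).IsHomogeneous 0 := hA.pderiv
    rw [← totalDegree_zero_iff_isHomogeneous, totalDegree_eq_zero_iff_eq_C] at h0
    rw [h0, coeff_pderiv]
    simp
  conv_lhs => rw [← one_smul ℕ A, ← hA.sum_X_mul_pderiv]
  simp [hconst, smul_eq_C_mul, mul_comm]

end MvPolynomial

theorem Finsupp.induction_single_one_add {σ : Type*} {motive : (σ →₀ ℕ) → Prop}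
    (zero : motive 0) (single_one_add : ∀ i d, motive d → motive (Finsupp.single i 1 + d))
    (d : σ →₀ ℕ) : motive d := by
  classical
  obtain ⟨m, rfl⟩ : ∃ m : Multiset σ, Multiset.toFinsupp m = d :=
    ⟨Finsupp.toMultiset d, by simp⟩
  induction m using Multiset.induction with
  | empty => simpa using zero
  | cons i m ih =>
    rw [← Multiset.singleton_add, Multiset.toFinsupp_add, Multiset.toFinsupp_singleton]
    exact single_one_add i _ ih

theorem prod_factorial_single_one_add {σ : Type*} [Fintype σ] [DecidableEq σ] (i : σ)
    (d : σ →₀ ℕ) : ∏ j, ((Finsupp.single i 1 + d : σ →₀ ℕ) j)! = (d i + 1) * ∏ j, (d j)! := by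
  have hj : ∀ j ∈ Finset.univ.erase i, ((Finsupp.single i 1 + d : σ →₀ ℕ) j)! = (d j)! :=
    fun j hj => by
      rw [Finsupp.add_apply, Finsupp.single_eq_of_ne (Finset.ne_of_mem_erase hj), zero_add]
  rw [← Finset.mul_prod_erase _ _ (Finset.mem_univ i),
    ← Finset.mul_prod_erase _ _ (Finset.mem_univ i), Finset.prod_congr rfl hj]
  simp [add_comm 1, Nat.factorial_succ, mul_assoc]

section

variable {N : ℕ}

theorem pderivPow_eq_prod_of_coe_eq {d : Fin N →₀ ℕ} {l : List (Fin N)}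
    (hl : (l : Multiset (Fin N)) = Finsupp.toMultiset d) :
    pderivPow d = (l.map fun i => ((pderiv i).toLinearMap :
      Module.End ℂ (MvPolynomial (Fin N) ℂ))).prod := by
  have hperm : (Finsupp.toMultiset d).toList.Perm l := Multiset.coe_eq_coe.1 (by simp [hl])
  refine (hperm.map _).prod_eq' (List.pairwise_map.2 (List.pairwise_of_forall fun i j => ?_))
  exact LinearMap.ext (pderiv_comm i j)

theorem pderivPow_zero : pderivPow (0 : Fin N →₀ ℕ) = 1 :=
  pderivPow_eq_prod_of_coe_eq (l := []) (by simp)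

theorem pderivPow_add (d e : Fin N →₀ ℕ) : pderivPow (d + e) = pderivPow d * pderivPow e := by
  rw [pderivPow_eq_prod_of_coe_eq
    (l := (Finsupp.toMultiset d).toList ++ (Finsupp.toMultiset e).toList)
    (by simp [← Multiset.coe_add]), List.map_append, List.prod_append, pderivPow, pderivPow]

theorem pderivPow_single_one (i : Fin N) :
    pderivPow (Finsupp.single i 1) = (pderiv i).toLinearMap := by
  rw [pderivPow_eq_prod_of_coe_eq (l := [i]) (by simp)]
  simp

theorem pderiv_pderivPow_apply (i : Fin N) (d : Fin N →₀ ℕ) (f : MvPolynomial (Fin N) ℂ) :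
    pderiv i (pderivPow d f) = pderivPow (Finsupp.single i 1 + d) f := by
  rw [pderivPow_add, pderivPow_single_one]
  rfl

theorem pderivPow_pderiv_apply (i : Fin N) (d : Fin N →₀ ℕ) (f : MvPolynomial (Fin N) ℂ) :
    pderivPow d (pderiv i f) = pderivPow (Finsupp.single i 1 + d) f := by
  rw [add_comm, pderivPow_add, pderivPow_single_one]
  rfl

theorem MvPolynomial.IsHomogeneous.pderivPow {f : MvPolynomial (Fin N) ℂ} {n : ℕ}
    (hf : f.IsHomogeneous n) (d : Fin N →₀ ℕ) :
    (_root_.pderivPow d f).IsHomogeneous (n - d.degree) := by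
  induction d using Finsupp.induction_single_one_add with
  | zero => simpa [pderivPow_zero] using hf
  | single_one_add i d ih =>
    rw [← pderiv_pderivPow_apply, map_add, Finsupp.degree_single, add_comm, ← Nat.sub_sub]
    exact ih.pderiv

theorem constantCoeff_pderivPow (d : Fin N →₀ ℕ) (f : MvPolynomial (Fin N) ℂ) :
    constantCoeff (pderivPow d f) = (∏ i, (d i)! : ℕ) * coeff d f := by
  induction d using Finsupp.induction_single_one_add generalizing f with
  | zero => simp [pderivPow_zero, constantCoeff_eq]
  | single_one_add i d ih =>
    rw [← pderivPow_pderiv_apply, ih, coeff_pderiv, prod_factorial_single_one_add,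
      add_comm d]
    push_cast
    ring

theorem fisher_eq_sum_of_support_subset {V : MvPolynomial (Fin N) ℂ} {S : Finset (Fin N →₀ ℕ)}
    (hS : V.support ⊆ S) (P : MvPolynomial (Fin N) ℂ) :
    fisher V P = ∑ d ∈ S, starRingEnd ℂ (coeff d V) • pderivPow d P :=
  Finset.sum_subset hS fun d _ hd => by
    rw [MvPolynomial.notMem_support_iff.1 hd, map_zero, zero_smul]

theorem fisher_add_left (V W P : MvPolynomial (Fin N) ℂ) :
    fisher (V + W) P = fisher V P + fisher W P := by
  rw [fisher_eq_sum_of_support_subset MvPolynomial.support_add,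
    fisher_eq_sum_of_support_subset Finset.subset_union_left,
    fisher_eq_sum_of_support_subset Finset.subset_union_right, ← Finset.sum_add_distrib]
  simp [add_smul]

theorem fisher_add_right (V P Q : MvPolynomial (Fin N) ℂ) :
    fisher V (P + Q) = fisher V P + fisher V Q := by
  simp [fisher, Finset.sum_add_distrib]

theorem fisher_smul_left (a : ℂ) (V P : MvPolynomial (Fin N) ℂ) :
    fisher (a • V) P = starRingEnd ℂ a • fisher V P := by
  rw [fisher_eq_sum_of_support_subset MvPolynomial.support_smul, fisher, Finset.smul_sum]
  simp [mul_smul]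

theorem fisher_monomial (d : Fin N →₀ ℕ) (a : ℂ) (P : MvPolynomial (Fin N) ℂ) :
    fisher (monomial d a) P = starRingEnd ℂ a • pderivPow d P := by
  rw [fisher_eq_sum_of_support_subset support_monomial_subset, Finset.sum_singleton,
    coeff_monomial, if_pos rfl]

theorem fisher_X (i : Fin N) (P : MvPolynomial (Fin N) ℂ) : fisher (X i) P = pderiv i P := by
  rw [X, fisher_monomial, pderivPow_single_one]
  simp

theorem fisher_mul (V W P : MvPolynomial (Fin N) ℂ) :
    fisher (V * W) P = fisher V (fisher W P) := by
  induction V using MvPolynomial.induction_on' with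
  | add V V' hV hV' => rw [add_mul, fisher_add_left, hV, hV', fisher_add_left]
  | monomial d a =>
    induction W using MvPolynomial.induction_on' with
    | add W W' hW hW' => rw [mul_add, fisher_add_left, hW, hW', fisher_add_left, fisher_add_right]
    | monomial e b =>
      rw [monomial_mul, fisher_monomial, fisher_monomial, fisher_monomial, map_smul,
        pderivPow_add, map_mul, smul_smul, Module.End.mul_apply]

theorem MvPolynomial.IsHomogeneous.fisher {V P : MvPolynomial (Fin N) ℂ} {m n : ℕ}
    (hV : V.IsHomogeneous m) (hP : P.IsHomogeneous n) :
    (_root_.fisher V P).IsHomogeneous (n - m) :=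
  IsHomogeneous.sum _ _ _ fun d hd => by
    have h := (hP.pderivPow d).C_mul (starRingEnd ℂ (coeff d V))
    rw [Finsupp.degree_eq_weight_one] at h
    rw [← hV (MvPolynomial.mem_support_iff.1 hd), smul_eq_C_mul]
    exact h

noncomputable def fisherInner (P Q : MvPolynomial (Fin N) ℂ) : ℂ := constantCoeff (fisher P Q)

theorem fisherInner_eq_sum_of_support_subset {P : MvPolynomial (Fin N) ℂ}
    {S : Finset (Fin N →₀ ℕ)} (hS : P.support ⊆ S) (Q : MvPolynomial (Fin N) ℂ) :
    fisherInner P Q = ∑ d ∈ S, (∏ i, (d i)! : ℕ) * (starRingEnd ℂ (coeff d P) * coeff d Q) := by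
  rw [fisherInner, fisher_eq_sum_of_support_subset hS, map_sum]
  refine Finset.sum_congr rfl fun d _ => ?_
  rw [smul_eq_C_mul, map_mul, constantCoeff_C, constantCoeff_pderivPow]
  ring

theorem fisherInner_conj_symm (P Q : MvPolynomial (Fin N) ℂ) :
    starRingEnd ℂ (fisherInner Q P) = fisherInner P Q := by
  rw [fisherInner_eq_sum_of_support_subset (S := P.support ∪ Q.support) Finset.subset_union_right,
    fisherInner_eq_sum_of_support_subset (S := P.support ∪ Q.support) Finset.subset_union_left,
    map_sum]
  simp [mul_comm]

theorem fisherInner_self (P : MvPolynomial (Fin N) ℂ) :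
    fisherInner P P =
      ((∑ d ∈ P.support, (∏ i, (d i)! : ℕ) * Complex.normSq (coeff d P) : ℝ) : ℂ) := by
  rw [fisherInner_eq_sum_of_support_subset subset_rfl]
  simp [Complex.normSq_eq_conj_mul_self]

theorem fisherInner_mul_left (V W C : MvPolynomial (Fin N) ℂ) :
    fisherInner (V * W) C = fisherInner W (fisher V C) := by
  rw [fisherInner, fisherInner, mul_comm, fisher_mul]

theorem fisherInner_X_left (i : Fin N) (D : MvPolynomial (Fin N) ℂ) :
    fisherInner (X i) D = coeff (Finsupp.single i 1) D := by
  simp [fisherInner, fisher_X, constantCoeff_eq, coeff_pderiv]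

noncomputable abbrev fisherInnerCore : InnerProductSpace.Core ℂ (MvPolynomial (Fin N) ℂ) where
  inner := fisherInner
  conj_inner_symm := fisherInner_conj_symm
  re_inner_nonneg P := by
    rw [RCLike.re_to_complex, fisherInner_self, Complex.ofReal_re]
    exact Finset.sum_nonneg fun d _ => mul_nonneg (Nat.cast_nonneg _) (Complex.normSq_nonneg _)
  add_left P Q R := by simp [fisherInner, fisher_add_left]
  smul_left P Q a := by
    rw [fisherInner, fisherInner, fisher_smul_left, smul_eq_C_mul, map_mul, constantCoeff_C]
  definite P hP := by
    replace hP : fisherInner P P = 0 := hP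
    rw [fisherInner_self, Complex.ofReal_eq_zero,
      Finset.sum_eq_zero_iff_of_nonneg fun d _ =>
        mul_nonneg (Nat.cast_nonneg _) (Complex.normSq_nonneg _)] at hP
    refine support_eq_empty.1 (Finset.eq_empty_of_forall_notMem fun d hd => ?_)
    have hfact : (∏ i, (d i)! : ℕ) ≠ 0 :=
      Finset.prod_ne_zero_iff.2 fun i _ => Nat.factorial_ne_zero _
    rcases mul_eq_zero.1 (hP d hd) with h | h
    · exact hfact (by exact_mod_cast h)
    · exact MvPolynomial.mem_support_iff.1 hd (Complex.normSq_eq_zero.1 h)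

noncomputable abbrev fisherNormedAddCommGroup : NormedAddCommGroup (MvPolynomial (Fin N) ℂ) :=
  fisherInnerCore.toNormedAddCommGroup

noncomputable abbrev fisherInnerProductSpace :
    @InnerProductSpace ℂ (MvPolynomial (Fin N) ℂ) _
      fisherNormedAddCommGroup.toSeminormedAddCommGroup :=
  InnerProductSpace.ofCore _

variable {ι : Type*}

-- The Fisher inner product is not canonical on `ℂ[z]`, so it is installed only locally.
attribute [local instance] fisherNormedAddCommGroup fisherInnerProductSpace

noncomputable def linearFormSpan (B : ι → MvPolynomial (Fin N) ℂ) :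
    Submodule ℂ (MvPolynomial (Fin N) ℂ) :=
  Submodule.span ℂ (Set.range fun p : ι × Fin N => X p.2 * B p.1)

theorem mem_linearFormSpan_iff [Fintype ι] {B : ι → MvPolynomial (Fin N) ℂ}
    {L : MvPolynomial (Fin N) ℂ} :
    L ∈ linearFormSpan B ↔
      ∃ A : ι → MvPolynomial (Fin N) ℂ, (∀ k, (A k).IsHomogeneous 1) ∧ L = ∑ k, A k * B k := by
  rw [linearFormSpan, Submodule.mem_span_range_iff_exists_fun]
  constructor
  · rintro ⟨c, rfl⟩
    refine ⟨fun k => ∑ i, C (c (k, i)) * X i, fun k => ?_, ?_⟩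
    · exact IsHomogeneous.sum _ _ _ fun i _ => isHomogeneous_C_mul_X _ i
    · simp [Fintype.sum_prod_type, Finset.sum_mul, smul_eq_C_mul, mul_assoc]
  · rintro ⟨A, hA, rfl⟩
    refine ⟨fun p => coeff (Finsupp.single p.2 1) (A p.1), ?_⟩
    conv_rhs => enter [2, k]; rw [(hA k).eq_sum_coeff_smul_X]
    simp [Fintype.sum_prod_type, Finset.sum_mul]

theorem mem_orthogonal_linearFormSpan_iff {B : ι → MvPolynomial (Fin N) ℂ} {m : ℕ}
    (hB : ∀ k, (B k).IsHomogeneous m) {C : MvPolynomial (Fin N) ℂ}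
    (hC : C.IsHomogeneous (m + 1)) :
    C ∈ (linearFormSpan B)ᗮ ↔ ∀ k, fisher (B k) C = 0 := by
  have hinner (k : ι) (i : Fin N) :
      inner ℂ (X i * B k) C = coeff (Finsupp.single i 1) (fisher (B k) C) := by
    rw [← fisherInner_X_left, ← fisherInner_mul_left, mul_comm]
    rfl
  have hlin (k : ι) : fisher (B k) C = ∑ i, coeff (Finsupp.single i 1) (fisher (B k) C) • X i :=
    IsHomogeneous.eq_sum_coeff_smul_X (by simpa using (hB k).fisher hC)
  rw [linearFormSpan, ← Submodule.span_singleton_le_iff_mem, ← Submodule.isOrtho_iff_le,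
    Submodule.isOrtho_comm, Submodule.isOrtho_span]
  simp only [Set.forall_mem_range, Set.mem_singleton_iff, forall_eq, Prod.forall, hinner]
  refine ⟨fun h k => ?_, fun h k i => by rw [h k, coeff_zero]⟩
  rw [hlin k]
  simp [h k]

theorem existsUnique_fisher_decomposition [Fintype ι] {B : ι → MvPolynomial (Fin N) ℂ} {m : ℕ}
    (hB : ∀ k, (B k).IsHomogeneous m) {P : MvPolynomial (Fin N) ℂ}
    (hP : P.IsHomogeneous (m + 1)) :
    ∃! LC : MvPolynomial (Fin N) ℂ × MvPolynomial (Fin N) ℂ,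
      (∃ A : ι → MvPolynomial (Fin N) ℂ, (∀ k, (A k).IsHomogeneous 1) ∧
        LC.1 = ∑ k, A k * B k) ∧
      P = LC.1 + LC.2 ∧ ∀ k, fisher (B k) LC.2 = 0 := by
  set K := linearFormSpan B
  have : FiniteDimensional ℂ K := FiniteDimensional.span_of_finite ℂ (Set.finite_range _)
  have hC {L C : MvPolynomial (Fin N) ℂ} (hL : L ∈ K) (hPLC : P = L + C) :
      C.IsHomogeneous (m + 1) := by
    obtain ⟨A, hA, rfl⟩ := mem_linearFormSpan_iff.1 hL
    rw [eq_sub_of_add_eq' hPLC.symm]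
    exact hP.sub (IsHomogeneous.sum _ _ _ fun k _ => add_comm 1 m ▸ (hA k).mul (hB k))
  have hchar (LC : MvPolynomial (Fin N) ℂ × MvPolynomial (Fin N) ℂ) :
      ((∃ A : ι → MvPolynomial (Fin N) ℂ, (∀ k, (A k).IsHomogeneous 1) ∧
        LC.1 = ∑ k, A k * B k) ∧ P = LC.1 + LC.2 ∧ ∀ k, fisher (B k) LC.2 = 0) ↔
      LC.1 ∈ K ∧ P = LC.1 + LC.2 ∧ LC.2 ∈ Kᗮ := by
    rw [← mem_linearFormSpan_iff]
    exact and_congr_right fun hL => and_congr_right fun hPLC =>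
      (mem_orthogonal_linearFormSpan_iff hB (hC hL hPLC)).symm
  refine ⟨(K.starProjection P, P - K.starProjection P), (hchar _).2 ⟨Submodule.coe_mem _,
    (add_sub_cancel _ _).symm, K.sub_starProjection_mem_orthogonal P⟩, fun LC hLC => ?_⟩
  obtain ⟨hL, hPLC, hCK⟩ := (hchar LC).1 hLC
  have hL_eq : K.starProjection P = LC.1 := K.eq_starProjection_of_mem_orthogonal' hL hCK hPLC
  ext1
  · exact hL_eq.symm
  · rw [hL_eq, hPLC, add_sub_cancel_left]

end

/-- Lemma 2.4 (generalized Fisher decomposition): for `Δ` homogeneous of degree `s`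
with partials `Δ_k`, every homogeneous polynomial `P` of degree `(t+1)s` decomposes
as `P = L + C` with `L = (Σ_k A_k Δ_k)·Δ^t` for linear forms `A_k` and
`(Δ_k Δ^t)* C = 0` for all `k`; moreover `L` and `C` are uniquely determined. -/
theorem stmt_6 {N : ℕ} (s t : ℕ) (Δ : MvPolynomial (Fin N) ℂ) (hΔh : Δ.IsHomogeneous s)
    (P : MvPolynomial (Fin N) ℂ) (hP : P.IsHomogeneous ((t + 1) * s)) :
    ∃! LC : MvPolynomial (Fin N) ℂ × MvPolynomial (Fin N) ℂ,
      (∃ A : Fin N → MvPolynomial (Fin N) ℂ, (∀ j, (A j).IsHomogeneous 1) ∧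
        LC.1 = (∑ j, A j * pderiv j Δ) * Δ ^ t) ∧
      P = LC.1 + LC.2 ∧
      ∀ j, fisher (pderiv j Δ * Δ ^ t) LC.2 = 0 := by
  rcases s with _ | n
  · have hpderiv (j : Fin N) : pderiv j Δ = 0 := by
      rw [← totalDegree_zero_iff_isHomogeneous, totalDegree_eq_zero_iff_eq_C] at hΔh
      rw [hΔh, pderiv_C]
    refine ⟨(0, P), ⟨⟨0, fun _ => isHomogeneous_zero _ _ _, by simp [hpderiv]⟩, (zero_add P).symm,
      by simp [hpderiv, fisher]⟩, ?_⟩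
    rintro ⟨L, C⟩ ⟨⟨A, -, hL⟩, hPLC, -⟩
    simp_all
  · have hB (j : Fin N) : (pderiv j Δ * Δ ^ t).IsHomogeneous (n + (n + 1) * t) :=
      hΔh.pderiv.mul (hΔh.pow t)
    have hP' : P.IsHomogeneous (n + (n + 1) * t + 1) := by convert hP using 1; ring
    simpa only [Finset.sum_mul, mul_assoc] using existsUnique_fisher_decomposition hB hP'
end

section
/- Let P(z, z̄) = Σ_{i,j=1}^N b_{ij} z_i z̄_j be a Hermitian-type bihomogeneous polynomial of bidegree (1,1) with tr(P) = Σ_k b_{kk} = 0. Then for every t ≥ 0, tr^{t+1}( Re(P(z,z̄)·⟨z,z⟩^t) ) = 0, where ⟨z,z⟩ = Σ_k z_k z̄_k and tr = Σ_k ∂²/(∂z_k ∂z̄_k). -/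
open MvPolynomial

/-- The trace operator `tr = Σ_k ∂²/(∂z_k ∂z̄_k)` on polynomials in `z, z̄`. -/
noncomputable def trOp {N : ℕ} (P : MvPolynomial (Fin N ⊕ Fin N) ℂ) :
    MvPolynomial (Fin N ⊕ Fin N) ℂ :=
  ∑ k : Fin N, pderiv (Sum.inl k) (pderiv (Sum.inr k) P)

/-- Formal conjugation of a polynomial in `z, z̄`: conjugate coefficients and swap
`z ↔ z̄`. -/
noncomputable def conjPoly {N : ℕ} (Q : MvPolynomial (Fin N ⊕ Fin N) ℂ) :
    MvPolynomial (Fin N ⊕ Fin N) ℂ :=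
  rename (Sum.swap) (map (starRingEnd ℂ) Q)

noncomputable def Sp (N : ℕ) : MvPolynomial (Fin N ⊕ Fin N) ℂ :=
  ∑ k : Fin N, X (Sum.inl k) * X (Sum.inr k)

noncomputable def Qp {N : ℕ} (b : Fin N → Fin N → ℂ) : MvPolynomial (Fin N ⊕ Fin N) ℂ :=
  ∑ i, ∑ j, C (b i j) * X (Sum.inl i) * X (Sum.inr j)

lemma dSl {N : ℕ} (k : Fin N) : pderiv (Sum.inl k) (Sp N) = X (Sum.inr k) := by
  simp [Sp, pderiv_mul, pderiv_X, Pi.single_apply]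

lemma dSr {N : ℕ} (k : Fin N) : pderiv (Sum.inr k) (Sp N) = X (Sum.inl k) := by
  simp [Sp, pderiv_mul, pderiv_X, Pi.single_apply]

lemma dQl {N : ℕ} (b : Fin N → Fin N → ℂ) (k : Fin N) :
    pderiv (Sum.inl k) (Qp b) = ∑ j, C (b k j) * X (Sum.inr j) := by
  simp [Qp, pderiv_mul, pderiv_X, Pi.single_apply, Finset.sum_ite_eq, mul_comm]

lemma dQr {N : ℕ} (b : Fin N → Fin N → ℂ) (k : Fin N) :
    pderiv (Sum.inr k) (Qp b) = ∑ i, C (b i k) * X (Sum.inl i) := by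
  simp [Qp, pderiv_mul, pderiv_X, Pi.single_apply, Finset.sum_ite_eq, mul_comm]


lemma dSl_pow {N : ℕ} (k : Fin N) (m : ℕ) :
    pderiv (Sum.inl k) (Sp N ^ (m+1))
      = ((m:MvPolynomial (Fin N ⊕ Fin N) ℂ)+1) * Sp N ^ m * X (Sum.inr k) := by
  induction m with
  | zero => simp [dSl]
  | succ m ih =>
    rw [pow_succ, pderiv_mul, ih, dSl]
    push_cast
    ring

lemma dSr_pow {N : ℕ} (k : Fin N) (m : ℕ) :
    pderiv (Sum.inr k) (Sp N ^ (m+1))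
      = ((m:MvPolynomial (Fin N ⊕ Fin N) ℂ)+1) * Sp N ^ m * X (Sum.inl k) := by
  induction m with
  | zero => simp [dSr]
  | succ m ih =>
    rw [pow_succ, pderiv_mul, ih, dSr]
    push_cast
    ring

lemma eulerS {N : ℕ} (m : ℕ) :
    ∑ k : Fin N, pderiv (Sum.inl k) (Sp N ^ m) * X (Sum.inl k)
      = (m : MvPolynomial (Fin N ⊕ Fin N) ℂ) * Sp N ^ m := by
  cases m with
  | zero => simp
  | succ m =>
    simp only [dSl_pow]
    have : ∑ k : Fin N, ((m:MvPolynomial (Fin N ⊕ Fin N) ℂ) + 1) * Sp N ^ m * X (Sum.inr k) * X (Sum.inl k)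
        = ((m:MvPolynomial (Fin N ⊕ Fin N) ℂ) + 1) * Sp N ^ m * Sp N := by
      rw [Sp, Finset.mul_sum]
      exact Finset.sum_congr rfl fun k _ => by ring
    rw [this]
    push_cast
    ring

lemma eulerQl {N : ℕ} (b : Fin N → Fin N → ℂ) :
    ∑ k : Fin N, pderiv (Sum.inl k) (Qp b) * X (Sum.inl k) = Qp b := by
  calc ∑ k : Fin N, pderiv (Sum.inl k) (Qp b) * X (Sum.inl k)
      = ∑ k : Fin N, (∑ j, C (b k j) * X (Sum.inr j)) * X (Sum.inl k) := by simp only [dQl]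
    _ = Qp b := by
        rw [Qp]
        refine Finset.sum_congr rfl fun k _ => ?_
        rw [Finset.sum_mul]
        exact Finset.sum_congr rfl fun j _ => by ring

lemma eulerQr {N : ℕ} (b : Fin N → Fin N → ℂ) :
    ∑ k : Fin N, pderiv (Sum.inr k) (Qp b) * X (Sum.inr k) = Qp b := by
  calc ∑ k : Fin N, pderiv (Sum.inr k) (Qp b) * X (Sum.inr k)
      = ∑ k : Fin N, (∑ i, C (b i k) * X (Sum.inl i)) * X (Sum.inr k) := by simp only [dQr]
    _ = Qp b := by
        rw [Qp, Finset.sum_comm]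
        refine Finset.sum_congr rfl fun k _ => ?_
        rw [Finset.sum_mul]

lemma trOp_Qp {N : ℕ} (b : Fin N → Fin N → ℂ) :
    (∑ k : Fin N, pderiv (Sum.inl k) (pderiv (Sum.inr k) (Qp b))) = C (∑ k, b k k) := by
  have h : ∀ k : Fin N, pderiv (Sum.inl k) (pderiv (Sum.inr k) (Qp b)) = C (b k k) := by
    intro k
    rw [dQr, map_sum]
    simp [pderiv_mul, pderiv_X, Pi.single_apply, Finset.sum_ite_eq, mul_comm]
  rw [Finset.sum_congr rfl fun k _ => h k, map_sum]

lemma pderiv_natCast_mul {N : ℕ} (i : Fin N ⊕ Fin N) (n : ℕ)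
    (f : MvPolynomial (Fin N ⊕ Fin N) ℂ) :
    pderiv i ((n : MvPolynomial (Fin N ⊕ Fin N) ℂ) * f)
      = (n : MvPolynomial (Fin N ⊕ Fin N) ℂ) * pderiv i f := by
  rw [← C_eq_coe_nat, pderiv_C_mul]

lemma trOp_QS {N : ℕ} (b : Fin N → Fin N → ℂ) (htr : ∑ k, b k k = 0) (m : ℕ) :
    trOp (Qp b * Sp N ^ (m+1))
      = C (((m:ℂ)+1) * ((m:ℂ)+(N:ℂ)+2)) * (Qp b * Sp N ^ m) := by
  set c : MvPolynomial (Fin N ⊕ Fin N) ℂ := (m : MvPolynomial (Fin N ⊕ Fin N) ℂ) + 1 with hc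
  have hcC : c = C ((m:ℂ)+1) := by rw [map_add, map_one, C_eq_coe_nat]
  have key : ∀ k : Fin N,
      pderiv (Sum.inl k) (pderiv (Sum.inr k) (Qp b * Sp N ^ (m+1)))
        = pderiv (Sum.inl k) (pderiv (Sum.inr k) (Qp b)) * Sp N ^ (m+1)
          + c * Sp N ^ m * (pderiv (Sum.inr k) (Qp b) * X (Sum.inr k))
          + c * Sp N ^ m * (pderiv (Sum.inl k) (Qp b) * X (Sum.inl k))
          + Qp b * c * (pderiv (Sum.inl k) (Sp N ^ m) * X (Sum.inl k))
          + Qp b * c * Sp N ^ m := by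
    intro k
    have h1 : pderiv (Sum.inl k) (c * Sp N ^ m * X (Sum.inl k))
        = c * (pderiv (Sum.inl k) (Sp N ^ m) * X (Sum.inl k) + Sp N ^ m) := by
      rw [mul_assoc, hcC, pderiv_C_mul, pderiv_mul, pderiv_X_self, mul_one, mul_add]
    rw [pderiv_mul, dSr_pow, map_add, pderiv_mul, pderiv_mul, dSl_pow, h1, ← hc]
    ring
  rw [trOp, Finset.sum_congr rfl fun k _ => key k]
  simp only [Finset.sum_add_distrib]
  rw [← Finset.sum_mul, trOp_Qp, htr, map_zero, zero_mul,
      ← Finset.mul_sum, ← Finset.mul_sum, eulerQr, eulerQl,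
      ← Finset.mul_sum, eulerS, Finset.sum_const, Finset.card_univ, Fintype.card_fin]
  have hC : C (((m:ℂ)+1) * ((m:ℂ)+(N:ℂ)+2))
      = c * ((m : MvPolynomial (Fin N ⊕ Fin N) ℂ) + (N : MvPolynomial (Fin N ⊕ Fin N) ℂ) + 2) := by
    rw [map_mul, ← hcC]
    congr 1
    rw [map_add, map_add, C_eq_coe_nat, C_eq_coe_nat, map_ofNat]
  rw [hC, hc]
  rw [nsmul_eq_mul]
  ring

lemma trOp_smul {N : ℕ} (a : ℂ) (p : MvPolynomial (Fin N ⊕ Fin N) ℂ) :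
    trOp (a • p) = a • trOp p := by
  simp only [trOp, Derivation.map_smul, Finset.smul_sum]

lemma trOp_iter_smul {N : ℕ} (n : ℕ) (a : ℂ) (p : MvPolynomial (Fin N ⊕ Fin N) ℂ) :
    trOp^[n] (a • p) = a • trOp^[n] p := by
  induction n generalizing p with
  | zero => rfl
  | succ n ih => rw [Function.iterate_succ_apply, Function.iterate_succ_apply, trOp_smul, ih]

lemma main0 {N : ℕ} (b : Fin N → Fin N → ℂ) (htr : ∑ k, b k k = 0) (t : ℕ) :
    trOp^[t+1] (Qp b * Sp N ^ t) = 0 := by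
  induction t with
  | zero =>
    rw [pow_zero, mul_one, Function.iterate_one, trOp, trOp_Qp, htr, map_zero]
  | succ t ih =>
    rw [Function.iterate_succ_apply, trOp_QS b htr t, ← smul_eq_C_mul, trOp_iter_smul, ih,
      smul_zero]

lemma conjPoly_Sp {N : ℕ} : conjPoly (Sp N) = Sp N := by
  rw [conjPoly, Sp, map_sum, map_sum]
  refine Finset.sum_congr rfl fun k _ => ?_
  rw [map_mul, map_mul, map_X, map_X, rename_X, rename_X]
  simp [mul_comm]

lemma conjPoly_Qp {N : ℕ} (b : Fin N → Fin N → ℂ) :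
    conjPoly (Qp b) = Qp (fun i j => (starRingEnd ℂ) (b j i)) := by
  rw [conjPoly, Qp, map_sum, map_sum]
  rw [Qp, Finset.sum_comm]
  refine Finset.sum_congr rfl fun i _ => ?_
  rw [map_sum, map_sum]
  refine Finset.sum_congr rfl fun j _ => ?_
  rw [map_mul, map_mul, map_mul, map_mul, map_X, map_X, map_C, rename_X, rename_X, rename_C]
  simp
  ring

lemma conjPoly_QS {N : ℕ} (b : Fin N → Fin N → ℂ) (t : ℕ) :
    conjPoly (Qp b * Sp N ^ t) = Qp (fun i j => (starRingEnd ℂ) (b j i)) * Sp N ^ t := by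
  rw [conjPoly, map_mul, map_mul, map_pow, map_pow]
  rw [show (rename Sum.swap) ((map (starRingEnd ℂ)) (Qp b)) = conjPoly (Qp b) from rfl,
    show (rename Sum.swap) ((map (starRingEnd ℂ)) (Sp N)) = conjPoly (Sp N) from rfl,
    conjPoly_Qp, conjPoly_Sp]

lemma Qp_add {N : ℕ} (b1 b2 : Fin N → Fin N → ℂ) :
    Qp b1 + Qp b2 = Qp (fun i j => b1 i j + b2 i j) := by
  simp only [Qp, ← Finset.sum_add_distrib]
  refine Finset.sum_congr rfl fun i _ => Finset.sum_congr rfl fun j _ => ?_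
  rw [map_add]
  ring

/-- If `P(z,z̄) = Σ b_{ij} z_i z̄_j` is trace-free (`Σ_k b_{kk} = 0`), then for every
`t ≥ 0`, `tr^{t+1}(Re(P·⟨z,z⟩^t)) = 0`, where `Re Q = (Q + Q̄)/2`. -/
theorem stmt_8 {N : ℕ} (b : Fin N → Fin N → ℂ) (htr : ∑ k, b k k = 0) (t : ℕ) :
    trOp^[t + 1]
      ((2⁻¹ : ℂ) •
        ((∑ i, ∑ j, C (b i j) * X (Sum.inl i) * X (Sum.inr j))
            * (∑ k : Fin N, X (Sum.inl k) * X (Sum.inr k)) ^ t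
          + conjPoly
            ((∑ i, ∑ j, C (b i j) * X (Sum.inl i) * X (Sum.inr j))
              * (∑ k : Fin N, X (Sum.inl k) * X (Sum.inr k)) ^ t))) = 0 := by
  have hQ : (∑ i, ∑ j, C (b i j) * X (Sum.inl i) * X (Sum.inr j)) = Qp b := rfl
  have hS : (∑ k : Fin N, X (Sum.inl k) * X (Sum.inr k)) = Sp N := rfl
  rw [hQ, hS, conjPoly_QS, ← add_mul, Qp_add]
  set b' : Fin N → Fin N → ℂ := fun i j => b i j + (starRingEnd ℂ) (b j i) with hb'
  have htr' : ∑ k, b' k k = 0 := by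
    simp only [hb', Finset.sum_add_distrib, htr, ← map_sum, map_zero, add_zero]
  rw [trOp_iter_smul, main0 b' htr' t, smul_zero]
end
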